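/- arXiv:2401.16838 — 3 statements merged into one kernel-verified Lean document; each statement's English description precedes it below -/
import Mathlib

section
/- (Soundness of DIV) Let M be a transition system with a variant term t taking values in a well-founded order with least element ⊥. Suppose for every transition S → S': if S satisfies ¬φ and some event is enabled in S, then t(S) ≠ ⊥ and t(S') < t(S); and if S satisfies φ then t(S') ≤ t(S). Then M is divergent in φ: for every infinite trace σ there exists k such that σ_ℓ satisfies φ for all ℓ ≥ k. -/
/-- An event is enabled in `s` iff `s` has some successor. -/
def Enabled {S : Type} (next : S → S → Prop) (s : S) : Prop := ∃ s', next s s'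

/-- An infinite trace of the transition system with successor relation `next`. -/
def IsInfTrace {S : Type} (next : S → S → Prop) (f : ℕ → S) : Prop :=
  ∀ k : ℕ, next (f k) (f (k + 1))

/-- Soundness of DIV: if along every transition `S → S'` the variant `t`
strictly decreases from a non-least value when `S ⊨ ¬φ` (and some event is
enabled in `S`), and does not increase when `S ⊨ φ`, then `M` is divergent
in `φ`: every infinite trace has a suffix in which all states satisfy `φ`. -/
theorem div_sound {S V : Type} [PartialOrder V] [OrderBot V]
    (hwf : WellFounded ((· < ·) : V → V → Prop))
    (next : S → S → Prop) (φ : S → Prop) (t : S → V)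
    (hvar : ∀ s s', next s s' →
      (¬ φ s → Enabled next s → t s ≠ ⊥ ∧ t s' < t s) ∧
      (φ s → t s' ≤ t s)) :
    ∀ f : ℕ → S, IsInfTrace next f →
      ∃ k : ℕ, ∀ l : ℕ, k ≤ l → φ (f l) := by
  intro f hf
  -- the variant is non-increasing step by step
  have hstep : ∀ n, t (f (n + 1)) ≤ t (f n) := by
    intro n
    by_cases hφ : φ (f n)
    · exact (hvar _ _ (hf n)).2 hφ
    · exact le_of_lt ((hvar _ _ (hf n)).1 hφ ⟨_, hf n⟩).2
  have hmono : ∀ m n, m ≤ n → t (f n) ≤ t (f m) := by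
    intro m n hmn
    induction n with
    | zero => simp_all
    | succ n ih =>
      rcases Nat.lt_succ_iff_lt_or_eq.mp (Nat.lt_succ_of_le hmn) with h | h
      · exact (hstep n).trans (ih (Nat.lt_succ_iff.mp h))
      · subst h; rfl
  -- take the minimum of the variant values along the trace
  obtain ⟨v, ⟨N, hN⟩, hmin⟩ := hwf.has_min (Set.range fun n => t (f n)) ⟨_, ⟨0, rfl⟩⟩
  refine ⟨N, fun l hl => ?_⟩
  by_contra hφ
  have hlt : t (f (l + 1)) < t (f l) :=
    ((hvar _ _ (hf l)).1 hφ ⟨_, hf l⟩).2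
  have : t (f l) ≤ v := hN ▸ hmono N l hl
  exact hmin _ ⟨l + 1, rfl⟩ (lt_of_lt_of_le hlt this)
end

section
/- (Soundness of PROG) Let φ₁, φ₂, φ₃ be state predicates. Suppose: (i) M is divergent in ¬φ₃ (every infinite trace has a suffix in which all states satisfy ¬φ₃); (ii) M leads from φ₃ ∧ ¬φ₂ to φ₃ ∨ φ₂ (every transition from a state satisfying φ₃ ∧ ¬φ₂ ends in a state satisfying φ₃ ∨ φ₂); (iii) every state of every trace of M satisfies φ₁ ∧ ¬φ₂ → φ₃. Then every trace of M satisfies □(φ₁ → ◇φ₂): whenever a state σ_k satisfies φ₁, there exists ℓ ≥ k with σ_ℓ ⊨ φ₂. -/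
/-- Soundness of PROG: if `M` is divergent in `¬φ₃`, `M` leads from
`φ₃ ∧ ¬φ₂` to `φ₃ ∨ φ₂`, and every state of every trace satisfies
`φ₁ ∧ ¬φ₂ → φ₃`, then every trace satisfies `□(φ₁ → ◇φ₂)`. -/
theorem prog_sound {S : Type} (next : S → S → Prop) (φ₁ φ₂ φ₃ : S → Prop)
    (hdiv : ∀ f : ℕ → S, IsInfTrace next f →
      ∃ k : ℕ, ∀ l : ℕ, k ≤ l → ¬ φ₃ (f l))
    (hleadsto : ∀ s s', next s s' → (φ₃ s ∧ ¬ φ₂ s) → (φ₃ s' ∨ φ₂ s'))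
    (hinv : ∀ f : ℕ → S, IsInfTrace next f →
      ∀ k : ℕ, (φ₁ (f k) ∧ ¬ φ₂ (f k)) → φ₃ (f k)) :
    ∀ f : ℕ → S, IsInfTrace next f →
      ∀ k : ℕ, φ₁ (f k) → ∃ l : ℕ, k ≤ l ∧ φ₂ (f l) := by
  intro f hf k h1
  by_contra h
  push_neg at h
  have hno : ∀ l, k ≤ l → ¬ φ₂ (f l) := h
  have h3 : ∀ l, k ≤ l → φ₃ (f l) := by
    intro l hl
    induction l with
    | zero =>
      have : k = 0 := Nat.le_zero.mp hl
      subst this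
      exact hinv f hf 0 ⟨h1, hno 0 le_rfl⟩
    | succ n ih =>
      rcases Nat.lt_or_ge k (n+1) with hk | hk
      · have hkn : k ≤ n := Nat.lt_succ_iff.mp hk
        have := hleadsto (f n) (f (n+1)) (hf n) ⟨ih hkn, hno n hkn⟩
        rcases this with h3' | h2'
        · exact h3'
        · exact absurd h2' (hno (n+1) hl)
      · have : k = n + 1 := le_antisymm hl hk
        subst this
        exact hinv f hf (n+1) ⟨h1, hno (n+1) le_rfl⟩
  obtain ⟨m, hm⟩ := hdiv f hf
  exact hm (max k m) (le_max_right _ _) (h3 _ (le_max_left _ _))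
end

section
/- (Soundness of EXT for □LTL) Let M̃ be the trivial extension of M. For any □LTL formula φ (built from state predicates by the constructors □ψ, □◇ψ, ◇□ψ, and □(χ → ◇ψ) with χ a state predicate): if every trace of M̃ satisfies φ, then every trace of M satisfies φ. -/
/-- A maximal trace of `M`: states `f 0, f 1, …` of length `len ∈ ℕ∞`
(`⊤` = infinite; a finite trace of length `n` consists of `f 0, …, f n`
and ends in a deadlocked state). -/
def MTrace {S : Type} (next : S → S → Prop) (f : ℕ → S) (len : ℕ∞) : Prop :=
  (∀ k : ℕ, (k : ℕ∞) < len → next (f k) (f (k + 1))) ∧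
  (∀ n : ℕ, len = (n : ℕ∞) → ¬ Enabled next (f n))

/-- The traces of the trivial extension `M̃` of `M`: the infinite traces of
`M`, together with, for each finite trace `S_0, …, S_n` of `M`, the infinite
trace `S_0, …, S_n, S_n, S_n, …`. -/
def ExtTrace {S : Type} (next : S → S → Prop) (g : ℕ → S) : Prop :=
  MTrace next g ⊤ ∨
  ∃ n : ℕ, MTrace next g (n : ℕ∞) ∧ ∀ m : ℕ, n ≤ m → g m = g n

/-- `M` is convergent in `φ`: no trace of `M` has an index `k` (within the
trace) such that all states at positions `≥ k` satisfy `φ`. -/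
def ConvM {S : Type} (next : S → S → Prop) (φ : S → Prop) : Prop :=
  ∀ (f : ℕ → S) (len : ℕ∞), MTrace next f len →
    ¬ ∃ k : ℕ, (k : ℕ∞) ≤ len ∧ ∀ l : ℕ, k ≤ l → (l : ℕ∞) ≤ len → φ (f l)

/-- `M̃` is convergent in `φ`. -/
def ConvExt {S : Type} (next : S → S → Prop) (φ : S → Prop) : Prop :=
  ∀ g : ℕ → S, ExtTrace next g → ¬ ∃ k : ℕ, ∀ l : ℕ, k ≤ l → φ (g l)

/-- `M` is divergent in `φ`: every infinite trace of `M` has a suffix in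
which all states satisfy `φ`. -/
def DivM {S : Type} (next : S → S → Prop) (φ : S → Prop) : Prop :=
  ∀ f : ℕ → S, MTrace next f ⊤ → ∃ k : ℕ, ∀ l : ℕ, k ≤ l → φ (f l)

/-- `M̃` is divergent in `φ` (all traces of `M̃` are infinite). -/
def DivExt {S : Type} (next : S → S → Prop) (φ : S → Prop) : Prop :=
  ∀ g : ℕ → S, ExtTrace next g → ∃ k : ℕ, ∀ l : ℕ, k ≤ l → φ (g l)

/-- The □LTL fragment: formulas built from state predicates by the
constructors □ψ, □◇ψ, ◇□ψ, and □(χ → ◇ψ) with χ a state predicate. -/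
inductive BoxLTL (S : Type) where
  | st : (S → Prop) → BoxLTL S
  | box : BoxLTL S → BoxLTL S
  | boxdia : BoxLTL S → BoxLTL S
  | diabox : BoxLTL S → BoxLTL S
  | prog : (S → Prop) → BoxLTL S → BoxLTL S

/-- Satisfaction of a □LTL formula on a (finite or infinite) trace given by
states `f 0, f 1, …` and length `len ∈ ℕ∞`; suffixes at position `k ≤ len`
are `fun n => f (n + k)` with length `len - k`. -/
def BSat {S : Type} : BoxLTL S → (ℕ → S) → ℕ∞ → Prop
  | .st P, f, _ => P (f 0)
  | .box ψ, f, len => ∀ k : ℕ, (k : ℕ∞) ≤ len →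
      BSat ψ (fun n => f (n + k)) (len - k)
  | .boxdia ψ, f, len => ∀ k : ℕ, (k : ℕ∞) ≤ len →
      ∃ l : ℕ, k ≤ l ∧ (l : ℕ∞) ≤ len ∧ BSat ψ (fun n => f (n + l)) (len - l)
  | .diabox ψ, f, len => ∃ k : ℕ, (k : ℕ∞) ≤ len ∧
      ∀ l : ℕ, k ≤ l → (l : ℕ∞) ≤ len → BSat ψ (fun n => f (n + l)) (len - l)
  | .prog χ ψ, f, len => ∀ k : ℕ, (k : ℕ∞) ≤ len → χ (f k) →
      ∃ l : ℕ, k ≤ l ∧ (l : ℕ∞) ≤ len ∧ BSat ψ (fun n => f (n + l)) (len - l)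

/-!
A finite trace `S_0, …, S_n` of `M` corresponds in `M̃` to the stuttered trace
`m ↦ S_(min m n)`. Every suffix of a stuttered trace is again the stuttered version of
a suffix of the original one (suffixes starting beyond `n` collapse onto the last state),
so by induction on the formula each of the □LTL constructors transfers from the stuttered
trace back to the finite one: a witness position `l` is replaced by `min l n`.
-/

def stutter {S : Type} (f : ℕ → S) (n : ℕ) : ℕ → S := fun m => f (min m n)

lemma stutter_shift {S : Type} (f : ℕ → S) (n l : ℕ) :
    (fun m => stutter f n (m + l)) = stutter (fun m => f (m + min l n)) (n - min l n) := by
  funext m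
  simp only [stutter]
  congr 1
  omega

lemma MTrace.extTrace_stutter {S : Type} {next : S → S → Prop} {f : ℕ → S} {n : ℕ}
    (hf : MTrace next f n) : ExtTrace next (stutter f n) := by
  refine Or.inr ⟨n, ⟨fun k hk => ?_, fun m hm => ?_⟩, fun m hm => ?_⟩
  · have hk : k < n := by exact_mod_cast hk
    simpa only [stutter, min_eq_left hk.le, min_eq_left (Nat.succ_le_of_lt hk)] using hf.1 k
      (by exact_mod_cast hk)
  · obtain rfl : n = m := by exact_mod_cast hm
    simpa only [stutter, min_self] using hf.2 n rfl
  · simp only [stutter, min_eq_right hm, min_self]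

lemma bsat_shift_of_stutter {S : Type} {ψ : BoxLTL S}
    (ih : ∀ (g : ℕ → S) (n : ℕ), BSat ψ (stutter g n) ⊤ → BSat ψ g n)
    {f : ℕ → S} {n : ℕ} (l : ℕ) (h : BSat ψ (fun m => stutter f n (m + l)) (⊤ - l)) :
    BSat ψ (fun m => f (m + min l n)) (n - (min l n : ℕ)) := by
  rw [ENat.top_sub_natCast, stutter_shift] at h
  simpa only [ENat.natCast_sub] using ih _ _ h

theorem bsat_of_bsat_stutter {S : Type} (φ : BoxLTL S) :
    ∀ (f : ℕ → S) (n : ℕ), BSat φ (stutter f n) ⊤ → BSat φ f n := by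
  induction φ with
  | st P =>
    intro f n h
    simpa only [BSat, stutter, Nat.zero_min] using h
  | box ψ ih =>
    intro f n h k hk
    have hk : k ≤ n := by exact_mod_cast hk
    simpa only [min_eq_left hk] using bsat_shift_of_stutter ih k (h k le_top)
  | boxdia ψ ih =>
    intro f n h k hk
    obtain ⟨l, hkl, -, hl⟩ := h k le_top
    have hk : k ≤ n := by exact_mod_cast hk
    exact ⟨min l n, le_min hkl hk, by exact_mod_cast min_le_right l n,
      bsat_shift_of_stutter ih l hl⟩
  | diabox ψ ih =>
    intro f n h
    obtain ⟨k, -, hk⟩ := h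
    refine ⟨min k n, by exact_mod_cast min_le_right k n, fun l hkl hln => ?_⟩
    have hln : l ≤ n := by exact_mod_cast hln
    -- if `n < k` then `l = n`
    have hmin : min (max l k) n = l := by omega
    simpa only [hmin] using bsat_shift_of_stutter ih _ (hk (max l k) (le_max_right l k) le_top)
  | prog χ ψ ih =>
    intro f n h k hk hχ
    have hk : k ≤ n := by exact_mod_cast hk
    obtain ⟨l, hkl, -, hl⟩ := h k le_top (by simpa only [stutter, min_eq_left hk] using hχ)
    exact ⟨min l n, le_min hkl hk, by exact_mod_cast min_le_right l n,
      bsat_shift_of_stutter ih l hl⟩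

/-- Soundness of EXT for □LTL: if every trace of the trivial extension `M̃`
satisfies a □LTL formula `φ`, then every trace of `M` satisfies `φ`. -/
theorem ext_sound {S : Type} (next : S → S → Prop) (φ : BoxLTL S)
    (h : ∀ g : ℕ → S, ExtTrace next g → BSat φ g ⊤) :
    ∀ (f : ℕ → S) (len : ℕ∞), MTrace next f len → BSat φ f len := by
  intro f len hf
  cases len with
  | top => exact h f (Or.inl hf)
  | coe n => exact bsat_of_bsat_stutter φ f n (h _ hf.extTrace_stutter)
end
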